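/- For F ∈ Pol_m[z] and G ∈ Pol_n[w], let H(F,G) := F(z)e₊ ⊗ G(w)f₋ - F(z)e₋ ⊗ G(w)f₊ in (V_m ⊗ ℂ²) ⊗ (V_n ⊗ ℂ²). Then 2(m+1)(n+1)·(id ⊗ pr_{F→F'}) ∘ pr_{++}(H(F,G)) corresponds to the polynomial (z-w)² F'G' + (z-w)(-m F G' + n F' G) + (m+n+2) F G, where pr_{++} is the projection onto V_{m+1} ⊠ V_{n+1} and pr_{F→F'} is the projection of ℂ²⊗ℂ² onto ℂ(e₊⊗f₋ - e₋⊗f₊) ≅ ℂ given by (ae₊+be₋)⊗(cf₊+df₋) ↦ ½(ad-bc). -/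

import Mathlib

open scoped TensorProduct
open Polynomial

noncomputable section

/-- Differentiation as an endomorphism of `ℂ[z]`. -/
def Dop : Module.End ℂ (Polynomial ℂ) := Polynomial.derivative

/-- Multiplication by `z` as an endomorphism of `ℂ[z]`. -/
def Mz : Module.End ℂ (Polynomial ℂ) := LinearMap.mulLeft ℂ (Polynomial.X)

/-- The operator `(m+1) - z∂`. -/
def Aop (m : ℕ) : Module.End ℂ (Polynomial ℂ) := ((m:ℂ)+1) • 1 - Mz ∘ₗ Dop

/-- Elements of `V_m ⊗ ℂ²` are written as pairs `(F₊, F₋)` of polynomials.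
This is the projection onto the summand `V_{m+1}` of `V_m ⊗ ℂ² ≅ V_{m+1} ⊕ V_{m-1}`:
`pr₊(F,0) = (1/(m+1))((m+1-z∂)F, ∂F)` and `pr₊(0,F) = (1/(m+1))((m+1-z∂)(zF), ∂(zF))`. -/
def prPlus (m : ℕ) : Module.End ℂ (Polynomial ℂ × Polynomial ℂ) :=
  ((1:ℂ)/((m:ℂ)+1)) •
    LinearMap.prod
      (Aop m ∘ₗ LinearMap.fst ℂ (Polynomial ℂ) (Polynomial ℂ)
        + Aop m ∘ₗ Mz ∘ₗ LinearMap.snd ℂ (Polynomial ℂ) (Polynomial ℂ))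
      (Dop ∘ₗ LinearMap.fst ℂ (Polynomial ℂ) (Polynomial ℂ)
        + Dop ∘ₗ Mz ∘ₗ LinearMap.snd ℂ (Polynomial ℂ) (Polynomial ℂ))

/-- The map `id ⊗ pr_{F→F'}`: on `(F₊,F₋) ⊗ (G₊,G₋)` it gives
`½(F₊ ⊗ G₋ - F₋ ⊗ G₊)`, the `ℂ²⊗ℂ²`-components being paired by
`(ae₊+be₋)⊗(cf₊+df₋) ↦ ½(ad-bc)`. -/
def idPrF :
    ((Polynomial ℂ × Polynomial ℂ) ⊗[ℂ] (Polynomial ℂ × Polynomial ℂ)) →ₗ[ℂ]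
      (Polynomial ℂ ⊗[ℂ] Polynomial ℂ) :=
  ((1:ℂ)/2) •
    (TensorProduct.map (LinearMap.fst ℂ (Polynomial ℂ) (Polynomial ℂ))
        (LinearMap.snd ℂ (Polynomial ℂ) (Polynomial ℂ))
      - TensorProduct.map (LinearMap.snd ℂ (Polynomial ℂ) (Polynomial ℂ))
        (LinearMap.fst ℂ (Polynomial ℂ) (Polynomial ℂ)))

/-- `H(F,G) = (F e₊) ⊗ (G f₋) - (F e₋) ⊗ (G f₊)`. -/
def Hel (F G : Polynomial ℂ) :
    (Polynomial ℂ × Polynomial ℂ) ⊗[ℂ] (Polynomial ℂ × Polynomial ℂ) :=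
  (F, (0 : Polynomial ℂ)) ⊗ₜ[ℂ] ((0 : Polynomial ℂ), G)
    - ((0 : Polynomial ℂ), F) ⊗ₜ[ℂ] (G, (0 : Polynomial ℂ))

open TensorProduct

lemma Aop_apply (m : ℕ) (F : ℂ[X]) :
    Aop m F = ((m:ℂ) + 1) • F - X * derivative F := rfl

lemma prPlus_apply (m : ℕ) (a b : ℂ[X]) :
    prPlus m (a, b) =
      ((1:ℂ) / ((m:ℂ) + 1)) • (Aop m (a + X * b), derivative (a + X * b)) := by
  simp [prPlus, Dop, Mz]

lemma smul_prPlus_inl (m : ℕ) (F : ℂ[X]) :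
    ((m:ℂ) + 1) • prPlus m (F, 0) = (((m:ℂ) + 1) • F - X * derivative F, derivative F) := by
  rw [prPlus_apply, smul_smul, mul_one_div_cancel (Nat.cast_add_one_ne_zero m), one_smul,
    mul_zero, add_zero, Aop_apply]

lemma smul_prPlus_inr (m : ℕ) (F : ℂ[X]) :
    ((m:ℂ) + 1) • prPlus m (0, F) =
      ((m:ℂ) • (X * F) - X ^ 2 * derivative F, F + X * derivative F) := by
  rw [prPlus_apply, smul_smul, mul_one_div_cancel (Nat.cast_add_one_ne_zero m), one_smul,
    zero_add, Aop_apply, derivative_mul, derivative_X, one_mul]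
  congr 1
  simp only [add_smul, one_smul, mul_add, pow_two, mul_assoc]
  abel

lemma two_smul_idPrF_tmul (x y : ℂ[X] × ℂ[X]) :
    (2:ℂ) • idPrF (x ⊗ₜ y) = x.1 ⊗ₜ y.2 - x.2 ⊗ₜ y.1 := by
  simp [idPrF, smul_smul]

lemma two_smul_idPrF_map_Hel (f g : Module.End ℂ (ℂ[X] × ℂ[X])) (F G : ℂ[X]) :
    (2:ℂ) • idPrF (map f g (Hel F G)) =
      (f (F, 0)).1 ⊗ₜ (g (0, G)).2 - (f (F, 0)).2 ⊗ₜ (g (0, G)).1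
        - ((f (0, F)).1 ⊗ₜ (g (G, 0)).2 - (f (0, F)).2 ⊗ₜ (g (G, 0)).1) := by
  rw [Hel, map_sub, map_sub, smul_sub, map_tmul, map_tmul, two_smul_idPrF_tmul,
    two_smul_idPrF_tmul]

theorem pr_plusplus_formula_general (m n : ℕ) (F G : Polynomial ℂ) :
    ((2:ℂ) * ((m:ℂ)+1) * ((n:ℂ)+1)) •
        idPrF (TensorProduct.map (prPlus m) (prPlus n) (Hel F G))
      = (Polynomial.X^2 * Polynomial.derivative F) ⊗ₜ[ℂ] Polynomial.derivative G
        - (2:ℂ) • ((Polynomial.X * Polynomial.derivative F) ⊗ₜ[ℂ]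
            (Polynomial.X * Polynomial.derivative G))
        + Polynomial.derivative F ⊗ₜ[ℂ] (Polynomial.X^2 * Polynomial.derivative G)
        - (m:ℂ) • ((Polynomial.X * F) ⊗ₜ[ℂ] Polynomial.derivative G
            - F ⊗ₜ[ℂ] (Polynomial.X * Polynomial.derivative G))
        + (n:ℂ) • ((Polynomial.X * Polynomial.derivative F) ⊗ₜ[ℂ] G
            - Polynomial.derivative F ⊗ₜ[ℂ] (Polynomial.X * G))
        + ((m:ℂ) + (n:ℂ) + 2) • (F ⊗ₜ[ℂ] G) := by
  -- Absorbing `m+1` and `n+1` into the projections clears their denominators.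
  have scaled : ((2:ℂ) * ((m:ℂ) + 1) * ((n:ℂ) + 1)) • idPrF (map (prPlus m) (prPlus n) (Hel F G))
      = (2:ℂ) • idPrF (map (((m:ℂ) + 1) • prPlus m) (((n:ℂ) + 1) • prPlus n) (Hel F G)) := by
    rw [map_smul_left, map_smul_right, LinearMap.smul_apply, LinearMap.smul_apply, map_smul,
      map_smul, smul_smul, smul_smul, mul_assoc]
  rw [scaled, two_smul_idPrF_map_Hel]
  simp only [LinearMap.smul_apply, smul_prPlus_inl, smul_prPlus_inr]
  simp only [tmul_add, add_tmul, tmul_sub, sub_tmul, tmul_smul, ← smul_tmul', pow_two, mul_assoc]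
  match_scalars <;> ring

/-- `2(m+1)(n+1)·(id ⊗ pr_{F→F'}) ∘ pr_{++}(H(F,G))` corresponds to the polynomial
`(z-w)² F'G' + (z-w)(-m F G' + n F' G) + (m+n+2) F G`. -/
theorem pr_plusplus_formula (m n : ℕ) (F G : Polynomial ℂ)
    (hF : F.natDegree ≤ m) (hG : G.natDegree ≤ n) :
    ((2:ℂ) * ((m:ℂ)+1) * ((n:ℂ)+1)) •
        idPrF (TensorProduct.map (prPlus m) (prPlus n) (Hel F G))
      = (Polynomial.X^2 * Polynomial.derivative F) ⊗ₜ[ℂ] Polynomial.derivative G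
        - (2:ℂ) • ((Polynomial.X * Polynomial.derivative F) ⊗ₜ[ℂ]
            (Polynomial.X * Polynomial.derivative G))
        + Polynomial.derivative F ⊗ₜ[ℂ] (Polynomial.X^2 * Polynomial.derivative G)
        - (m:ℂ) • ((Polynomial.X * F) ⊗ₜ[ℂ] Polynomial.derivative G
            - F ⊗ₜ[ℂ] (Polynomial.X * Polynomial.derivative G))
        + (n:ℂ) • ((Polynomial.X * Polynomial.derivative F) ⊗ₜ[ℂ] G
            - Polynomial.derivative F ⊗ₜ[ℂ] (Polynomial.X * G))
        + ((m:ℂ) + (n:ℂ) + 2) • (F ⊗ₜ[ℂ] G) :=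
  pr_plusplus_formula_general m n F G
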